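/- arXiv:1312.5431 — 5 statements merged into one kernel-verified Lean document; each statement's English description precedes it below -/
import Mathlib

section
/- Let Γ be a group and let φ : I[Γ] → ℝ be a positive linear functional, i.e., φ is linear, φ(ξ*) = φ(ξ) for all ξ ∈ I[Γ], and φ(η) ≥ 0 for all η ∈ Σ²I[Γ]. Then there exists a sequence of positive linear functionals φₙ : ℝ[Γ] → ℝ (linear, φₙ(ξ*) = φₙ(ξ), and φₙ(η) ≥ 0 for all η ∈ Σ²ℝ[Γ]) such that φₙ(ξ) → φ(ξ) as n → ∞ for every ξ ∈ I[Γ]. -/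
open MonoidAlgebra Finset RealInnerProductSpace

/-- The involution `ξ*(x) = ξ(x⁻¹)` on the real group algebra `ℝ[Γ]`. -/
def astar {Γ : Type*} [Group Γ] (ξ : MonoidAlgebra ℝ Γ) : MonoidAlgebra ℝ Γ :=
  MonoidAlgebra.ofCoeff (Finsupp.equivMapDomain (Equiv.inv Γ) ξ.coeff)

/-- The augmentation character `ℝ[Γ] → ℝ`, `ξ ↦ Σ_x ξ(x)`. -/
noncomputable def aug (Γ : Type*) [Group Γ] : MonoidAlgebra ℝ Γ →ₐ[ℝ] ℝ :=
  MonoidAlgebra.lift ℝ ℝ Γ 1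

/-- The augmentation ideal `I[Γ] = {ξ ∈ ℝ[Γ] : Σ_x ξ(x) = 0}`, as an `ℝ`-submodule. -/
noncomputable def augIdeal (Γ : Type*) [Group Γ] : Submodule ℝ (MonoidAlgebra ℝ Γ) :=
  LinearMap.ker (aug Γ).toLinearMap

/-- `Σ²ℝ[Γ]`, the set of finite sums of hermitian squares in `ℝ[Γ]`. -/
def SOS (Γ : Type*) [Group Γ] : Set (MonoidAlgebra ℝ Γ) :=
  {ξ | ∃ (n : ℕ) (f : Fin n → MonoidAlgebra ℝ Γ), ξ = ∑ i, astar (f i) * f i}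

/-- `Σ²I[Γ]`, the set of finite sums of hermitian squares of elements of `I[Γ]`. -/
def SOSI (Γ : Type*) [Group Γ] : Set (MonoidAlgebra ℝ Γ) :=
  {ξ | ∃ (n : ℕ) (f : Fin n → MonoidAlgebra ℝ Γ),
    (∀ i, f i ∈ augIdeal Γ) ∧ ξ = ∑ i, astar (f i) * f i}

lemma aug_astar {Γ : Type*} [Group Γ] (ξ : MonoidAlgebra ℝ Γ) : aug Γ (astar ξ) = aug Γ ξ := by
  simp [aug, MonoidAlgebra.lift_apply, astar, Finsupp.sum_equivMapDomain]

lemma one_sub_of_mem_augIdeal {Γ : Type*} [Group Γ] (x : Γ) :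
    (1 : MonoidAlgebra ℝ Γ) - of ℝ Γ x ∈ augIdeal Γ := by
  simp [augIdeal, aug]

lemma astar_mem_augIdeal {Γ : Type*} [Group Γ] {ξ : MonoidAlgebra ℝ Γ} (h : ξ ∈ augIdeal Γ) :
    astar ξ ∈ augIdeal Γ := by
  have h' : aug Γ ξ = 0 := h
  simp [augIdeal, aug_astar, h']

lemma astar_mul_self_mem_augIdeal {Γ : Type*} [Group Γ] {ξ : MonoidAlgebra ℝ Γ}
    (h : ξ ∈ augIdeal Γ) : astar ξ * ξ ∈ augIdeal Γ := by
  have h' : aug Γ ξ = 0 := h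
  simp [augIdeal, aug_astar, h']

/-!
The functional `ξ ↦ φ (ξ - aug ξ • 1)` extends `φ` to `ℝ[Γ]`; it is the pairing
`⟨ξ, ψ⟩ = Σₓ ξ(x) ψ(x)` with `ψ x = φ (x - 1)`, a symmetric conditionally positive definite
function on `Γ`. By Schoenberg's theorem every `exp (t ψ)`, `t ≥ 0`, is positive definite, so
`φₙ = n • ⟨·, exp (ψ / n)⟩` is a positive functional on `ℝ[Γ]`. On `I[Γ]` it equals
`⟨·, n (exp (ψ / n) - 1)⟩`, which tends to `⟨·, ψ⟩ = φ`.
-/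

namespace Matrix

variable {ι : Type*}

theorem posSemidef_vecMulVec_self_real (d : ι → ℝ) : (vecMulVec d d).PosSemidef := by
  refine ⟨IsHermitian.ext fun i j => by simp [vecMulVec_apply, mul_comm], fun v => ?_⟩
  have h : (v.sum fun i a => v.sum fun j b => star a * vecMulVec d d i j * b) =
      (v.sum fun i a => a * d i) ^ 2 := by
    simp only [vecMulVec_apply, star_trivial, sq, Finsupp.sum_mul, Finsupp.mul_sum]
    exact Finsupp.sum_congr fun i _ => Finsupp.sum_congr fun j _ => by ring
  rw [h]
  positivity

theorem PosSemidef.map_pow {K : Matrix ι ι ℝ} (hK : K.PosSemidef) (m : ℕ) :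
    (K.map (· ^ m)).PosSemidef := by
  induction m with
  | zero =>
    convert posSemidef_vecMulVec_self_real (fun _ : ι => (1 : ℝ))
    ext
    simp [vecMulVec_apply]
  | succ m ih =>
    rw [show K.map (· ^ (m + 1)) = K.map (· ^ m) ⊙ K by ext; simp [pow_succ]]
    exact ih.hadamard hK

theorem PosSemidef.map_exp {K : Matrix ι ι ℝ} (hK : K.PosSemidef) :
    (K.map Real.exp).PosSemidef := by
  refine ⟨hK.isHermitian.map _ fun _ => by simp, fun v => ?_⟩
  have hexp (x : ℝ) : HasSum (fun m : ℕ => x ^ m / m.factorial) (Real.exp x) := by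
    simpa [Real.exp_eq_exp_ℝ] using NormedSpace.expSeries_div_hasSum_exp x
  have hsum : HasSum (fun m : ℕ => (m.factorial : ℝ)⁻¹ *
      v.sum fun i a => v.sum fun j b => star a * K.map (· ^ m) i j * b)
      (v.sum fun i a => v.sum fun j b => star a * K.map Real.exp i j * b) := by
    simp only [Finsupp.sum, Finset.mul_sum, map_apply]
    refine hasSum_sum fun i _ => hasSum_sum fun j _ => ?_
    exact (((hexp (K i j)).mul_left (star (v i))).mul_right (v j)).congr_fun fun m => by ring
  exact hsum.nonneg fun m => mul_nonneg (by positivity) ((hK.map_pow m).2 v)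

end Matrix

open Filter Topology

lemma tendsto_nat_mul_exp_inv_mul_sub_one (c : ℝ) :
    Tendsto (fun n : ℕ => (n : ℝ) * (Real.exp ((n : ℝ)⁻¹ * c) - 1)) atTop (𝓝 c) := by
  have hderiv : HasDerivAt (fun t => Real.exp (t * c)) c 0 := by
    simpa using ((hasDerivAt_id (0 : ℝ)).mul_const c).exp
  refine (hderiv.tendsto_slope_zero_right.comp
    (tendsto_inv_atTop_nhdsGT_zero.comp tendsto_natCast_atTop_atTop)).congr fun n => ?_
  simp

section Pairing

variable {M : Type*}

noncomputable def pairing (ψ : M → ℝ) : MonoidAlgebra ℝ M →ₗ[ℝ] ℝ :=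
  Finsupp.linearCombination ℝ ψ ∘ₗ (coeffLinearEquiv ℝ).toLinearMap

lemma pairing_apply (ψ : M → ℝ) (ξ : MonoidAlgebra ℝ M) :
    pairing ψ ξ = ξ.coeff.sum fun x c => c * ψ x := rfl

@[simp]
lemma pairing_single (ψ : M → ℝ) (x : M) (c : ℝ) : pairing ψ (single x c) = c * ψ x := by
  simp [pairing, coeff_single]

@[simp]
lemma pairing_of [Monoid M] (ψ : M → ℝ) (x : M) : pairing ψ (of ℝ M x) = ψ x := by
  simp [of_apply]

lemma tendsto_pairing {α : Type*} {l : Filter α} {ψs : α → M → ℝ} {ψ : M → ℝ}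
    (h : ∀ x, Tendsto (fun n => ψs n x) l (𝓝 (ψ x))) (ξ : MonoidAlgebra ℝ M) :
    Tendsto (fun n => pairing (ψs n) ξ) l (𝓝 (pairing ψ ξ)) :=
  tendsto_finsetSum _ fun x _ => (h x).const_mul _

end Pairing

section GroupAlgebra

variable {Γ : Type*} [Group Γ]

noncomputable def astarLinearEquiv : MonoidAlgebra ℝ Γ ≃ₗ[ℝ] MonoidAlgebra ℝ Γ :=
  mapDomainLinearEquiv ℝ ℝ (Equiv.inv Γ)

lemma astarLinearEquiv_apply (ξ : MonoidAlgebra ℝ Γ) : astarLinearEquiv ξ = astar ξ := rfl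

lemma astar_of (x : Γ) : astar (of ℝ Γ x) = of ℝ Γ x⁻¹ :=
  congrArg ofCoeff (Finsupp.equivMapDomain_single _ _ _)

lemma astar_one : astar (1 : MonoidAlgebra ℝ Γ) = 1 := by
  simpa [of_apply, ← one_def] using astar_of (1 : Γ)

lemma pairing_astar {ψ : Γ → ℝ} (hψ : ∀ x, ψ x⁻¹ = ψ x) (ξ : MonoidAlgebra ℝ Γ) :
    pairing ψ (astar ξ) = pairing ψ ξ := by
  simp [pairing_apply, astar, Finsupp.sum_equivMapDomain, hψ]

lemma pairing_astar_sum_mul_sum (ψ : Γ → ℝ) (v : Γ →₀ ℝ) (e : Γ → MonoidAlgebra ℝ Γ) :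
    pairing ψ (astar (v.sum fun x a => a • e x) * v.sum fun y b => b • e y) =
      v.sum fun x a => v.sum fun y b => a * pairing ψ (astar (e x) * e y) * b := by
  rw [← astarLinearEquiv_apply, map_finsuppSum]
  simp only [Finsupp.sum_mul, Finsupp.mul_sum, map_finsuppSum, map_smul, astarLinearEquiv_apply,
    smul_mul_smul_comm, smul_eq_mul]
  rw [Finsupp.sum_comm]
  exact Finsupp.sum_congr fun x _ => Finsupp.sum_congr fun y _ => by ring

def groupKernel (ψ : Γ → ℝ) : Matrix Γ Γ ℝ := Matrix.of fun x y => ψ (x⁻¹ * y)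

lemma pairing_astar_mul_self (ψ : Γ → ℝ) (ξ : MonoidAlgebra ℝ Γ) :
    pairing ψ (astar ξ * ξ) =
      ξ.coeff.sum fun x a => ξ.coeff.sum fun y b => star a * groupKernel ψ x y * b := by
  have hξ : (ξ.coeff.sum fun x a => a • of ℝ Γ x) = ξ := by
    simp [of_apply]
  calc pairing ψ (astar ξ * ξ)
      = pairing ψ (astar (ξ.coeff.sum fun x a => a • of ℝ Γ x) *
          ξ.coeff.sum fun y b => b • of ℝ Γ y) := by rw [hξ]
    _ = _ := by
      rw [pairing_astar_sum_mul_sum]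
      simp only [astar_of, ← map_mul, pairing_of, groupKernel, Matrix.of_apply, star_trivial]

lemma pairing_nonneg_of_mem_SOS {ψ : Γ → ℝ} (hψ : (groupKernel ψ).PosSemidef)
    {η : MonoidAlgebra ℝ Γ} (hη : η ∈ SOS Γ) : 0 ≤ pairing ψ η := by
  obtain ⟨n, f, rfl⟩ := hη
  rw [map_sum]
  exact Finset.sum_nonneg fun i _ => (pairing_astar_mul_self ψ (f i)).symm ▸ hψ.2 _

def IsCondPosDef (ψ : Γ → ℝ) : Prop := ∀ ξ ∈ augIdeal Γ, 0 ≤ pairing ψ (astar ξ * ξ)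

lemma pairing_astar_one_sub_mul_one_sub (ψ : Γ → ℝ) (x y : Γ) :
    pairing ψ (astar (1 - of ℝ Γ x) * (1 - of ℝ Γ y)) = ψ (x⁻¹ * y) - ψ x⁻¹ - ψ y + ψ 1 := by
  rw [← astarLinearEquiv_apply, map_sub, astarLinearEquiv_apply, astarLinearEquiv_apply, astar_one,
    astar_of]
  have h : (1 - of ℝ Γ x⁻¹) * (1 - of ℝ Γ y) =
      of ℝ Γ (x⁻¹ * y) - of ℝ Γ x⁻¹ - of ℝ Γ y + of ℝ Γ 1 := by
    rw [map_mul, map_one]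
    noncomm_ring
  rw [h]
  simp only [map_add, map_sub, pairing_of]

/-- **Schoenberg**: the kernel `(x, y) ↦ ψ(x⁻¹y) - ψ(x) - ψ(y) + ψ(1)` is the Gram kernel of the
elements `1 - x` for the form `(η, ξ) ↦ pairing ψ (η* ξ)`, so it is positive semidefinite, and
`exp (t ψ(x⁻¹y))` is the entrywise exponential of `t` times it, rescaled by
`exp (t ψ(x)) exp (t ψ(y)) exp (-t ψ(1))`. -/
theorem IsCondPosDef.posSemidef_groupKernel_exp {ψ : Γ → ℝ} (hψ : IsCondPosDef ψ)
    (hsymm : ∀ x, ψ x⁻¹ = ψ x) {t : ℝ} (ht : 0 ≤ t) :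
    (groupKernel fun x => Real.exp (t * ψ x)).PosSemidef := by
  set K : Matrix Γ Γ ℝ := Matrix.of fun x y => ψ (x⁻¹ * y) - ψ x - ψ y + ψ 1
  have hK : K.PosSemidef := by
    refine ⟨Matrix.IsHermitian.ext fun x y => ?_, fun v => ?_⟩
    · simp only [K, Matrix.of_apply, star_trivial]
      rw [← hsymm (y⁻¹ * x), mul_inv_rev, inv_inv]
      ring
    · have hmem : (v.sum fun x a => a • (1 - of ℝ Γ x)) ∈ augIdeal Γ :=
        Submodule.finsuppSum_mem _ _ _ _ fun x _ =>
          Submodule.smul_mem _ _ (one_sub_of_mem_augIdeal x)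
      have h := hψ _ hmem
      rw [pairing_astar_sum_mul_sum] at h
      simpa only [pairing_astar_one_sub_mul_one_sub, hsymm, K, Matrix.of_apply, star_trivial]
        using h
  have hexp : (groupKernel fun x => Real.exp (t * ψ x)) = Real.exp (-(t * ψ 1)) •
      (Matrix.vecMulVec (fun x => Real.exp (t * ψ x)) (fun x => Real.exp (t * ψ x))).hadamard
        ((t • K).map Real.exp) := by
    ext x y
    simp only [groupKernel, K, Matrix.of_apply, Matrix.smul_apply, Matrix.hadamard_apply,
      Matrix.vecMulVec_apply, Matrix.map_apply, smul_eq_mul, ← Real.exp_add]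
    ring_nf
  rw [hexp]
  exact ((Matrix.posSemidef_vecMulVec_self_real _).hadamard (hK.smul ht).map_exp).smul
    (Real.exp_pos _).le

lemma pairing_mul_sub_const_of_mem (ψ : Γ → ℝ) (c a : ℝ) {ξ : MonoidAlgebra ℝ Γ}
    (hξ : ξ ∈ augIdeal Γ) : pairing (fun x => c * (ψ x - a)) ξ = c * pairing ψ ξ := by
  have h : pairing (fun x => c * (ψ x - a)) = c • (pairing ψ - a • (aug Γ).toLinearMap) := by
    ext x
    simp [aug]
  have hξ' : aug Γ ξ = 0 := hξ
  simp [h, hξ']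

noncomputable def augProj : MonoidAlgebra ℝ Γ →ₗ[ℝ] augIdeal Γ :=
  LinearMap.codRestrict (augIdeal Γ)
    (LinearMap.id - Algebra.linearMap ℝ (MonoidAlgebra ℝ Γ) ∘ₗ (aug Γ).toLinearMap)
    fun ξ => by
      change aug Γ (ξ - algebraMap ℝ _ (aug Γ ξ)) = 0
      rw [map_sub, AlgHom.commutes]
      simp

lemma augProj_of (x : Γ) : (augProj (of ℝ Γ x) : MonoidAlgebra ℝ Γ) = of ℝ Γ x - 1 := by
  simp [augProj, aug, ← one_def]

lemma augProj_of_mem {ξ : MonoidAlgebra ℝ Γ} (hξ : ξ ∈ augIdeal Γ) : augProj ξ = ⟨ξ, hξ⟩ := by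
  have hξ' : aug Γ ξ = 0 := hξ
  ext
  simp [augProj, hξ']

section Functional

variable (φ : augIdeal Γ →ₗ[ℝ] ℝ)

/-- `x ↦ φ (x - 1)`, a conditionally positive definite function on `Γ`. -/
noncomputable def cpdFunction (x : Γ) : ℝ := φ (augProj (of ℝ Γ x))

lemma apply_eq_pairing_cpdFunction (ξ : augIdeal Γ) : φ ξ = pairing (cpdFunction φ) ξ := by
  have h : φ ∘ₗ augProj = pairing (cpdFunction φ) := by
    ext x
    simp [cpdFunction, of_apply]
  rw [← h, LinearMap.comp_apply, augProj_of_mem ξ.2]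

lemma cpdFunction_inv
    (hherm : ∀ ξ : augIdeal Γ, φ ⟨astar (ξ : MonoidAlgebra ℝ Γ), astar_mem_augIdeal ξ.2⟩ = φ ξ)
    (x : Γ) : cpdFunction φ x⁻¹ = cpdFunction φ x := by
  rw [cpdFunction, cpdFunction, ← hherm (augProj (of ℝ Γ x))]
  congr 1
  apply Subtype.ext
  change (augProj (of ℝ Γ x⁻¹) : MonoidAlgebra ℝ Γ) = astar (augProj (of ℝ Γ x))
  rw [augProj_of, augProj_of, ← astarLinearEquiv_apply, map_sub, astarLinearEquiv_apply,
    astarLinearEquiv_apply, astar_of, astar_one]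

lemma isCondPosDef_cpdFunction
    (hpos : ∀ ξ : augIdeal Γ, (ξ : MonoidAlgebra ℝ Γ) ∈ SOSI Γ → 0 ≤ φ ξ) :
    IsCondPosDef (cpdFunction φ) := fun ξ hξ => by
  have hmem := astar_mul_self_mem_augIdeal hξ
  rw [← apply_eq_pairing_cpdFunction φ ⟨_, hmem⟩]
  exact hpos _ ⟨1, fun _ => ξ, fun _ => hξ, by simp⟩

end Functional

end GroupAlgebra

/-- every positive linear functional on `I[Γ]` is a pointwise limit of
(restrictions of) positive linear functionals on `ℝ[Γ]`. -/
theorem stmt5 {Γ : Type*} [Group Γ]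
    (φ : ↥(augIdeal Γ) →ₗ[ℝ] ℝ)
    (hherm : ∀ ξ : ↥(augIdeal Γ), φ ⟨astar (ξ : MonoidAlgebra ℝ Γ), astar_mem_augIdeal ξ.2⟩ = φ ξ)
    (hpos : ∀ ξ : ↥(augIdeal Γ), (ξ : MonoidAlgebra ℝ Γ) ∈ SOSI Γ → 0 ≤ φ ξ) :
    ∃ φs : ℕ → (MonoidAlgebra ℝ Γ →ₗ[ℝ] ℝ),
      (∀ (n : ℕ) (ξ : MonoidAlgebra ℝ Γ), φs n (astar ξ) = φs n ξ) ∧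
      (∀ (n : ℕ) (η : MonoidAlgebra ℝ Γ), η ∈ SOS Γ → 0 ≤ φs n η) ∧
      (∀ ξ : ↥(augIdeal Γ),
        Filter.Tendsto (fun n => φs n (ξ : MonoidAlgebra ℝ Γ)) Filter.atTop
          (nhds (φ ξ))) := by
  set ψ := cpdFunction φ
  have hsymm : ∀ x, ψ x⁻¹ = ψ x := cpdFunction_inv φ hherm
  refine ⟨fun n => (n : ℝ) • pairing fun x => Real.exp ((n : ℝ)⁻¹ * ψ x),
    fun n ξ => ?_, fun n η hη => ?_, fun ξ => ?_⟩
  · rw [LinearMap.smul_apply, pairing_astar fun x => by rw [hsymm], LinearMap.smul_apply]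
  · have hkernel := (isCondPosDef_cpdFunction φ hpos).posSemidef_groupKernel_exp hsymm
      (inv_nonneg.2 (Nat.cast_nonneg (α := ℝ) n))
    rw [LinearMap.smul_apply, smul_eq_mul]
    exact mul_nonneg n.cast_nonneg (pairing_nonneg_of_mem_SOS hkernel hη)
  · rw [apply_eq_pairing_cpdFunction]
    refine (tendsto_pairing (fun x => tendsto_nat_mul_exp_inv_mul_sub_one (ψ x)) _).congr
      fun n => ?_
    rw [pairing_mul_sub_const_of_mem _ _ _ ξ.2]
    rfl
end

section
/- Let Γ be a group and φ : I[Γ] → ℝ a positive linear functional (linear, φ(ξ*) = φ(ξ), and φ(η) ≥ 0 for all η ∈ Σ²I[Γ]). Define ψ : Γ → ℝ by ψ(x) = φ(1 − x). Then ψ is of conditionally negative type: for every ξ ∈ I[Γ] one has Σ_{x,y ∈ Γ} ψ(y⁻¹x) ξ(y) ξ(x) = −φ(ξ*ξ) ≤ 0. -/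
open MonoidAlgebra Finset RealInnerProductSpace

section Expansion

variable {Γ : Type*} [Group Γ]

lemma aug_eq_sum (ξ : MonoidAlgebra ℝ Γ) :
    aug Γ ξ = ∑ x ∈ ξ.coeff.support, ξ.coeff x := by
  simp [aug, MonoidAlgebra.lift_apply, Finsupp.sum]

lemma eq_sum_smul_of (ξ : MonoidAlgebra ℝ Γ) :
    ξ = ∑ x ∈ ξ.coeff.support, ξ.coeff x • of ℝ Γ x := by
  conv_lhs => rw [← MonoidAlgebra.sum_coeff_single ξ]
  simp [Finsupp.sum, MonoidAlgebra.of_apply]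

lemma astar_eq_sum (ξ : MonoidAlgebra ℝ Γ) :
    astar ξ = ∑ x ∈ ξ.coeff.support, ξ.coeff x • of ℝ Γ x⁻¹ := by
  ext a
  rw [MonoidAlgebra.coeff_sum, Finset.sum_apply', Finset.sum_eq_single a⁻¹]
  · simp [astar]
  · intro b _ hb
    simp [inv_eq_iff_eq_inv, hb]
  · intro h
    simp [Finsupp.notMem_support_iff.mp h]

lemma astar_mul_self_eq_sum (ξ : MonoidAlgebra ℝ Γ) :
    astar ξ * ξ = ∑ y ∈ ξ.coeff.support, ∑ x ∈ ξ.coeff.support,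
      (ξ.coeff y * ξ.coeff x) • of ℝ Γ (y⁻¹ * x) := by
  rw [astar_eq_sum]
  conv_lhs => arg 2; rw [eq_sum_smul_of ξ]
  simp only [Finset.sum_mul_sum, smul_mul_smul_comm, ← map_mul]

/-- Because `Σ_{x,y} ξ(y) ξ(x) = (Σ_x ξ(x))² = 0` on `I[Γ]`, the constant terms drop out. -/
lemma sum_sum_smul_one_sub_of_eq_neg {ξ : MonoidAlgebra ℝ Γ}
    (hξ : ξ ∈ augIdeal Γ) :
    ∑ y ∈ ξ.coeff.support, ∑ x ∈ ξ.coeff.support,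
      (ξ.coeff y * ξ.coeff x) • (1 - of ℝ Γ (y⁻¹ * x)) = -(astar ξ * ξ) := by
  have hsum : ∑ y ∈ ξ.coeff.support, ∑ x ∈ ξ.coeff.support, ξ.coeff y * ξ.coeff x = 0 := by
    rw [← Finset.sum_mul_sum, ← aug_eq_sum, show aug Γ ξ = 0 from hξ, mul_zero]
  simp only [smul_sub, Finset.sum_sub_distrib, ← Finset.sum_smul, hsum, zero_smul, zero_sub,
    astar_mul_self_eq_sum]

lemma astar_mul_self_mem_SOSI {ξ : MonoidAlgebra ℝ Γ}
    (hξ : ξ ∈ augIdeal Γ) : astar ξ * ξ ∈ SOSI Γ :=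
  ⟨1, fun _ => ξ, fun _ => hξ, by simp⟩

end Expansion

theorem stmt7_general {Γ : Type*} [Group Γ]
    (φ : ↥(augIdeal Γ) →ₗ[ℝ] ℝ)
    (hpos : ∀ ξ : ↥(augIdeal Γ), (ξ : MonoidAlgebra ℝ Γ) ∈ SOSI Γ → 0 ≤ φ ξ)
    (ψ : Γ → ℝ) (hψ : ∀ x : Γ, ψ x = φ ⟨1 - of ℝ Γ x, one_sub_of_mem_augIdeal x⟩)
    (ξ : MonoidAlgebra ℝ Γ) (hξ : ξ ∈ augIdeal Γ) :
    (∑ x ∈ ξ.coeff.support, ∑ y ∈ ξ.coeff.support, ψ (y⁻¹ * x) * ξ.coeff y * ξ.coeff x)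
        = - φ ⟨astar ξ * ξ, astar_mul_self_mem_augIdeal hξ⟩ ∧
      - φ ⟨astar ξ * ξ, astar_mul_self_mem_augIdeal hξ⟩ ≤ 0 := by
  have hlift : ∑ y ∈ ξ.coeff.support, ∑ x ∈ ξ.coeff.support,
      (ξ.coeff y * ξ.coeff x) • (⟨1 - of ℝ Γ (y⁻¹ * x), one_sub_of_mem_augIdeal _⟩ : augIdeal Γ)
        = -⟨astar ξ * ξ, astar_mul_self_mem_augIdeal hξ⟩ :=
    Subtype.ext (by push_cast; exact sum_sum_smul_one_sub_of_eq_neg hξ)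
  refine ⟨?_, neg_nonpos.mpr (hpos _ (astar_mul_self_mem_SOSI hξ))⟩
  rw [Finset.sum_comm, ← map_neg, ← hlift]
  simp only [map_sum, map_smul, hψ, smul_eq_mul]
  exact Finset.sum_congr rfl fun y _ => Finset.sum_congr rfl fun x _ => by ring

/-- `ψ(x) = φ(1-x)` is of conditionally negative type for a positive
linear functional `φ` on `I[Γ]`. -/
theorem stmt7 {Γ : Type*} [Group Γ]
    (φ : ↥(augIdeal Γ) →ₗ[ℝ] ℝ)
    (hherm : ∀ ξ : ↥(augIdeal Γ), φ ⟨astar (ξ : MonoidAlgebra ℝ Γ), astar_mem_augIdeal ξ.2⟩ = φ ξ)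
    (hpos : ∀ ξ : ↥(augIdeal Γ), (ξ : MonoidAlgebra ℝ Γ) ∈ SOSI Γ → 0 ≤ φ ξ)
    (ψ : Γ → ℝ) (hψ : ∀ x : Γ, ψ x = φ ⟨1 - of ℝ Γ x, one_sub_of_mem_augIdeal x⟩)
    (ξ : MonoidAlgebra ℝ Γ) (hξ : ξ ∈ augIdeal Γ) :
    (∑ x ∈ ξ.coeff.support, ∑ y ∈ ξ.coeff.support, ψ (y⁻¹ * x) * ξ.coeff y * ξ.coeff x)
        = - φ ⟨astar ξ * ξ, astar_mul_self_mem_augIdeal hξ⟩ ∧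
      - φ ⟨astar ξ * ξ, astar_mul_self_mem_augIdeal hξ⟩ ≤ 0 :=
  stmt7_general φ hpos ψ hψ ξ hξ
end

section
/- Let V be a real vector space and C ⊆ V a convex subset. Then the set of algebraic interior points of the set of algebraic interior points of C equals the set of algebraic interior points of C: interior(interior(C)) = interior(C). -/
/-- The set of algebraic interior points of `C`: points `c ∈ C` such that for every `v`
there is `t ∈ (0,1]` with `(1-t)•c + t•v ∈ C`. -/
def algInterior {V : Type*} [AddCommGroup V] [Module ℝ V] (C : Set V) : Set V :=
  {c | c ∈ C ∧ ∀ v : V, ∃ t : ℝ, t ∈ Set.Ioc (0 : ℝ) 1 ∧ (1 - t) • c + t • v ∈ C}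

/-! For `c ∈ algInterior C` and `y = (1 - t) • c + t • v ∈ C`, the point `(1 - t/2) • c + (t/2) • v`
is the midpoint of `c` and `y`; in a convex set, a combination of an algebraic interior point with
any point of `C` that puts positive weight on the former is again an algebraic interior point. -/

section

variable {V : Type*} [AddCommGroup V] [Module ℝ V] {C : Set V}

theorem algInterior_subset : algInterior C ⊆ C := fun _ hc => hc.1

theorem Convex.combo_algInterior_self_mem_algInterior (hC : Convex ℝ C) {c y : V}
    (hc : c ∈ algInterior C) (hy : y ∈ C) {a b : ℝ} (ha : 0 < a) (hb : 0 ≤ b) (hab : a + b = 1) :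
    a • c + b • y ∈ algInterior C := by
  refine ⟨hC hc.1 hy ha.le hb hab, fun v => ?_⟩
  obtain ⟨t, ⟨ht0, ht1⟩, hw⟩ := hc.2 v
  have hD : 0 < 1 - t * b := by nlinarith
  -- The point reached from `a • c + b • y` towards `v` is a convex combination of `y` and the
  -- point `w` reached from `c` towards `v`, with weight `μ = a / (1 - t b)` on `w`.
  set μ := a / (1 - t * b) with hμ
  have hμ0 : 0 ≤ μ := div_nonneg ha.le hD.le
  have hμ1 : μ ≤ 1 := (div_le_one hD).2 (by nlinarith)
  refine ⟨μ * t, ⟨mul_pos (div_pos ha hD) ht0, by nlinarith⟩, ?_⟩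
  have hcombo : μ • ((1 - t) • c + t • v) + (1 - μ) • y
      = (1 - μ * t) • (a • c + b • y) + (μ * t) • v := by
    obtain rfl : b = 1 - a := by linarith
    rw [hμ]
    match_scalars <;> field_simp [hD.ne'] <;> ring
  exact hcombo ▸ hC hw hy hμ0 (by linarith) (by ring)

end

/-- `interior(interior(C)) = interior(C)` for a convex set `C`. -/
theorem stmt12 {V : Type*} [AddCommGroup V] [Module ℝ V] {C : Set V} (hC : Convex ℝ C) :
    algInterior (algInterior C) = algInterior C := by
  refine algInterior_subset.antisymm fun c hc => ⟨hc, fun v => ?_⟩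
  obtain ⟨t, ⟨ht0, ht1⟩, hy⟩ := hc.2 v
  refine ⟨t / 2, ⟨by linarith, by linarith⟩, ?_⟩
  have hmid : (1 - t / 2) • c + (t / 2) • v
      = (1 / 2 : ℝ) • c + (1 / 2 : ℝ) • ((1 - t) • c + t • v) := by
    match_scalars <;> ring
  exact hmid ▸ hC.combo_algInterior_self_mem_algInterior hc hy (by norm_num) (by norm_num)
    (by norm_num)
end

section
/- Let v₁, …, vₙ and v be vectors in ℚ^m (equivalently, finitely supported ℚ-valued functions). If the linear equation Σᵢ rᵢ vᵢ = v has a solution with r₁, …, rₙ nonnegative real numbers, then it has a solution with r₁, …, rₙ nonnegative rational numbers. -/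
/-!
By the conic Carathéodory theorem, a nonnegative real solution can be replaced by one whose
support indexes linearly independent vectors: while the support vectors are dependent, move
along a dependence until a coordinate vanishes. Over a linearly independent support the
coefficients are unique, and a `ℚ`-linear retraction `ℝ → ℚ` maps a solution to a solution
with the same support, so the unique coefficients are rational.
-/

open Finset Function

variable {ι : Type*} [Fintype ι]

theorem LinearIndepOn.eq_of_sum_smul_eq {R M : Type*} [Ring R] [AddCommGroup M] [Module R M]
    {v : ι → M} {s : Set ι} (hv : LinearIndepOn R v s) {c r : ι → R}
    (hc : support c ⊆ s) (hr : support r ⊆ s) (h : ∑ i, c i • v i = ∑ i, r i • v i) :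
    c = r := by
  have := linearIndepOn_iffₛ.1 hv (Finsupp.equivFunOnFinite.symm c)
    (by simpa [Finsupp.mem_supported] using hc)
    (Finsupp.equivFunOnFinite.symm r) (by simpa [Finsupp.mem_supported] using hr)
    (by simpa [Finsupp.linearCombination_apply, Finsupp.sum_fintype] using h)
  simpa using this

theorem exists_pos_sum_smul_eq_zero_of_not_linearIndepOn {R M : Type*} [Ring R] [LinearOrder R]
    [IsOrderedRing R] [AddCommGroup M] [Module R M] {v : ι → M} {s : Set ι}
    (h : ¬LinearIndepOn R v s) :
    ∃ g : ι → R, support g ⊆ s ∧ ∑ i, g i • v i = 0 ∧ ∃ i, 0 < g i := by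
  simp only [linearIndepOn_iff'', not_forall, exists_prop] at h
  obtain ⟨t, g, hts, hgt, hsum, i, -, hgi⟩ := h
  have hsupp : support g ⊆ t := fun j hj => by_contra fun hjt => hj (hgt j hjt)
  have hsum' : ∑ i, g i • v i = 0 := by
    rw [← hsum]
    exact (sum_subset (subset_univ t) fun j _ hjt => by simp [hgt j hjt]).symm
  rcases lt_or_gt_of_ne hgi with hneg | hpos
  · exact ⟨-g, by simpa using hsupp.trans hts, by simpa using hsum', i, by simpa using hneg⟩
  · exact ⟨g, hsupp.trans hts, hsum', i, hpos⟩

section LinearOrderedField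

variable {𝕜 : Type*} [Field 𝕜] [LinearOrder 𝕜] [IsStrictOrderedRing 𝕜]

theorem exists_nonneg_sub_smul_support_ssubset {r g : ι → 𝕜} (hr : 0 ≤ r)
    (hg : support g ⊆ support r) (hpos : ∃ i, 0 < g i) :
    ∃ t : 𝕜, 0 ≤ r - t • g ∧ support (r - t • g) ⊂ support r := by
  classical
  obtain ⟨i₁, hi₁⟩ := hpos
  -- the largest admissible step is the least ratio `r i / g i` over the positive `g i`
  obtain ⟨i₀, hi₀, hmin⟩ := (univ.filter (0 < g ·)).exists_min_image (fun i => r i / g i)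
    ⟨i₁, by simpa using hi₁⟩
  replace hi₀ : 0 < g i₀ := (mem_filter.1 hi₀).2
  set t := r i₀ / g i₀
  have ht : 0 ≤ t := div_nonneg (hr i₀) hi₀.le
  refine ⟨t, fun i => ?_, fun i hi => ?_, fun hsub => ?_⟩
  · rcases lt_or_ge 0 (g i) with hgi | hgi
    · have : t * g i ≤ r i := (le_div_iff₀ hgi).1 (hmin i (by simpa using hgi))
      simpa using this
    · simpa using (mul_nonpos_of_nonneg_of_nonpos ht hgi).trans (hr i)
  · by_contra hri
    have hgi : g i = 0 := notMem_support.1 fun h => hri (hg h)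
    exact hi (by simp [notMem_support.1 hri, hgi])
  · have hri₀ : i₀ ∈ support (r - t • g) := hsub (hg hi₀.ne')
    exact hri₀ (by simp [t, div_mul_cancel₀ _ hi₀.ne'])

theorem exists_nonneg_sum_smul_eq_linearIndepOn_support {E : Type*} [AddCommGroup E]
    [Module 𝕜 E] (v : ι → E) {r : ι → 𝕜} (hr : 0 ≤ r) :
    ∃ r' : ι → 𝕜, 0 ≤ r' ∧ ∑ i, r' i • v i = ∑ i, r i • v i ∧
      LinearIndepOn 𝕜 v (support r') := by
  induction hn : (support r).ncard using Nat.strong_induction_on generalizing r with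
  | _ n ih =>
    by_cases hli : LinearIndepOn 𝕜 v (support r)
    · exact ⟨r, hr, rfl, hli⟩
    obtain ⟨g, hgr, hg, hpos⟩ := exists_pos_sum_smul_eq_zero_of_not_linearIndepOn hli
    obtain ⟨t, hrt, hsupp⟩ := exists_nonneg_sub_smul_support_ssubset hr hgr hpos
    obtain ⟨r', hr', hsum, hli'⟩ := ih _ (hn ▸ Set.ncard_lt_ncard hsupp) hrt rfl
    refine ⟨r', hr', hsum.trans ?_, hli'⟩
    simp [sub_smul, sum_sub_distrib, mul_smul, ← smul_sum, hg]

end LinearOrderedField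

theorem mem_range_algebraMap_of_linearIndepOn_support {K L κ : Type*} [Field K] [Field L]
    [Algebra K L] {v : ι → κ → K} {w : κ → K} {r : ι → L}
    (hli : LinearIndepOn L (fun i j => algebraMap K L (v i j)) (support r))
    (hw : ∑ i, r i • (fun j => algebraMap K L (v i j)) = fun j => algebraMap K L (w j))
    (i : ι) : r i ∈ Set.range (algebraMap K L) := by
  obtain ⟨π, hπ⟩ := (Algebra.linearMap K L).exists_leftInverse_of_injective
    (LinearMap.ker_eq_bot.2 (algebraMap K L).injective)
  have hπ_apply (q : K) : π (algebraMap K L q) = q := LinearMap.congr_fun hπ q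
  have hπw : ∑ i, algebraMap K L (π (r i)) • (fun j => algebraMap K L (v i j)) =
      fun j => algebraMap K L (w j) := by
    funext j
    have hwj := congrFun hw j
    simp only [Finset.sum_apply, Pi.smul_apply, smul_eq_mul] at hwj ⊢
    calc ∑ i, algebraMap K L (π (r i)) * algebraMap K L (v i j)
        = algebraMap K L (π (∑ i, r i * algebraMap K L (v i j))) := by
          simp only [map_sum, ← map_mul, mul_comm (r _), ← Algebra.smul_def, map_smul,
            smul_eq_mul, mul_comm (v _ j)]
      _ = algebraMap K L (w j) := by rw [hwj, hπ_apply]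
  have hπr : (fun i => algebraMap K L (π (r i))) = r :=
    hli.eq_of_sum_smul_eq (fun j hj hrj => hj (by simp [hrj])) subset_rfl (hπw.trans hw.symm)
  exact ⟨π (r i), congrFun hπr i⟩

/-- a linear system with rational data which has a nonnegative real
solution has a nonnegative rational solution. -/
theorem stmt15 {m n : ℕ} (v : Fin n → Fin m → ℚ) (w : Fin m → ℚ)
    (h : ∃ r : Fin n → ℝ, (∀ i, 0 ≤ r i) ∧ ∀ j, ∑ i, r i * (v i j : ℝ) = (w j : ℝ)) :
    ∃ r : Fin n → ℚ, (∀ i, 0 ≤ r i) ∧ ∀ j, ∑ i, r i * v i j = w j := by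
  obtain ⟨r₀, hr₀, hw₀⟩ := h
  obtain ⟨r, hr, hsum, hli⟩ := exists_nonneg_sum_smul_eq_linearIndepOn_support
    (fun i j => algebraMap ℚ ℝ (v i j)) (show 0 ≤ r₀ from hr₀)
  have hw : ∑ i, r i • (fun j => algebraMap ℚ ℝ (v i j)) = fun j => algebraMap ℚ ℝ (w j) := by
    rw [hsum]; funext j; simpa using hw₀ j
  choose q hq using mem_range_algebraMap_of_linearIndepOn_support hli hw
  refine ⟨q, fun i => by simpa [← hq i] using hr i, fun j => ?_⟩
  have hwj := congrFun hw j
  simp only [← hq, eq_ratCast, Finset.sum_apply, Pi.smul_apply, smul_eq_mul] at hwj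
  exact_mod_cast hwj
end

section
/- Let Γ be a group generated by a finite symmetric set S with 1 ∉ S, let E = {(x, y) ∈ S × S : x⁻¹y ∈ S} be nonempty, μ(x) = |{ y ∈ S : (x, y) ∈ E }| / |E|, and let Λ = d*d/2 on L²(S, μ) and P the orthogonal projection onto constants, as in the link construction. Writing A_{x,y} = ⟨Aδ_y, δ_x⟩_{L²(S,μ)} for an operator A on L²(S, μ) (so I_{x,y} = δ_{x,y}μ(x) and P_{x,y} = μ(x)μ(y)), one has for every λ ≠ 0 the identity in ℝ[Γ]: Σ_{x,y ∈ S} (λ⁻¹Λ_{x,y} + P_{x,y} − I_{x,y}) · x⁻¹y = Δ_μ² − (2 − λ⁻¹)Δ_μ. -/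
open MonoidAlgebra Finset RealInnerProductSpace

/-
Split the sum along `λ⁻¹Λ + P − I` and put `m = Σ μ(x)x`, so that `Δ_μ = 1 − m`. The diagonal
`I` contributes `Σ μ(x) · 1 = 1`. Since `S` and `μ` are invariant under inversion, the rank-one
`P` contributes `(Σ μ(x)x⁻¹)(Σ μ(y)y) = m²`. The coefficient `Λ_{x,y}` is an average over edges
`(a, b) ∈ E` of `(dδ_x)(a, b)(dδ_y)(a, b)`, so `Λ` contributes the average of the hermitian
squares `(b⁻¹ − a⁻¹)(b − a) = 2 − a⁻¹b − b⁻¹a`; as `E` is swap-invariant and `a⁻¹b = s` has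
`μ(s)|E|` solutions in `E`, this is `1 − m`. Finally `λ⁻¹(1 − m) + m² − 1 = Δ² − (2 − λ⁻¹)Δ`.
-/

theorem sum_sub_ite_smul {α M : Type*} [DecidableEq α] [AddCommGroup M] [Module ℝ M]
    {S : Finset α} {a b : α} (ha : a ∈ S) (hb : b ∈ S) (φ : α → M) :
    ∑ x ∈ S, ((if b = x then 1 else 0) - (if a = x then 1 else 0) : ℝ) • φ x = φ b - φ a := by
  simp only [sub_smul, ite_smul, one_smul, zero_smul, sum_sub_distrib, sum_ite_eq, ha, hb, if_true]

section GroupAlgebra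

variable {Γ : Type*} [Group Γ]

theorem sum_sum_mul_smul_of_inv_mul (S : Finset Γ) (f g : Γ → ℝ) :
    ∑ x ∈ S, ∑ y ∈ S, (f x * g y) • of ℝ Γ (x⁻¹ * y)
      = (∑ x ∈ S, f x • of ℝ Γ x⁻¹) * ∑ y ∈ S, g y • of ℝ Γ y := by
  simp only [sum_mul_sum, map_mul, smul_mul_smul_comm]

theorem sum_smul_of_inv_eq {S : Finset Γ} (hS : ∀ s ∈ S, s⁻¹ ∈ S) {f : Γ → ℝ}
    (hf : ∀ x ∈ S, f x⁻¹ = f x) :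
    ∑ x ∈ S, f x • of ℝ Γ x⁻¹ = ∑ x ∈ S, f x • of ℝ Γ x :=
  sum_nbij' (·⁻¹) (·⁻¹) (fun x hx => hS x hx) (fun x hx => hS x hx) (fun x _ => inv_inv x)
    (fun x _ => inv_inv x) (fun x hx => by rw [← hf x hx])

theorem sum_sum_ite_smul_of_inv_mul [DecidableEq Γ] (S : Finset Γ) (f : Γ → ℝ) :
    ∑ x ∈ S, ∑ y ∈ S, (if x = y then f x else 0) • of ℝ Γ (x⁻¹ * y)
      = (∑ x ∈ S, f x) • 1 := by
  simp only [ite_smul, zero_smul, sum_ite_eq, inv_mul_cancel, map_one, sum_ite_mem, inter_self,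
    sum_smul]

theorem of_inv_sub_of_inv_mul_of_sub_of (a b : Γ) :
    (of ℝ Γ b⁻¹ - of ℝ Γ a⁻¹) * (of ℝ Γ b - of ℝ Γ a)
      = 2 - of ℝ Γ (a⁻¹ * b) - of ℝ Γ (b⁻¹ * a) := by
  simp only [sub_mul, mul_sub, ← map_mul, inv_mul_cancel, map_one]
  rw [← one_add_one_eq_two]; abel

end GroupAlgebra

section Link

variable {Γ : Type*} [Group Γ] [DecidableEq Γ]

def linkEdges (S : Finset Γ) : Finset (Γ × Γ) :=
  (S ×ˢ S).filter fun p => p.1⁻¹ * p.2 ∈ S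

def linkDegree (S : Finset Γ) (x : Γ) : ℕ :=
  #(S.filter fun y => x⁻¹ * y ∈ S)

variable {S : Finset Γ}

theorem mem_linkEdges {p : Γ × Γ} : p ∈ linkEdges S ↔ p.1 ∈ S ∧ p.2 ∈ S ∧ p.1⁻¹ * p.2 ∈ S := by
  simp [linkEdges, and_assoc]

theorem sum_linkDegree : ∑ x ∈ S, linkDegree S x = #(linkEdges S) := by
  rw [linkEdges, card_filter, sum_product]
  exact sum_congr rfl fun x _ => card_filter _ _

theorem linkDegree_inv (x : Γ) : linkDegree S x⁻¹ = linkDegree S x :=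
  card_nbij' (x * ·) (x⁻¹ * ·) (fun y hy => by simp_all) (fun y hy => by simp_all)
    (fun y _ => by simp) (fun y _ => by simp)

theorem swap_mem_linkEdges (hS : ∀ s ∈ S, s⁻¹ ∈ S) {p : Γ × Γ} :
    p.swap ∈ linkEdges S ↔ p ∈ linkEdges S := by
  have key : ∀ a b : Γ, (b⁻¹ * a ∈ S ↔ a⁻¹ * b ∈ S) := fun a b =>
    ⟨fun h => by simpa using hS _ h, fun h => by simpa using hS _ h⟩
  simp only [mem_linkEdges, Prod.fst_swap, Prod.snd_swap, key]
  tauto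

theorem card_linkEdges_filter_inv_mul_eq (hS : ∀ s ∈ S, s⁻¹ ∈ S) {s : Γ} (hs : s ∈ S) :
    #((linkEdges S).filter fun p => p.1⁻¹ * p.2 = s) = linkDegree S s :=
  card_nbij' (fun p => p.1⁻¹) (fun y => (y⁻¹, y⁻¹ * s))
    (fun p hp => by
      obtain ⟨hpE, rfl⟩ := mem_filter.mp hp
      obtain ⟨h1, h2, -⟩ := mem_linkEdges.mp hpE
      simpa [linkDegree] using ⟨hS _ h1, hS _ h2⟩)
    (fun y hy => by
      obtain ⟨hy, hsy⟩ := mem_filter.mp hy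
      simpa [mem_linkEdges, hs] using ⟨hS _ hy, by simpa using hS _ hsy⟩)
    (fun p hp => by
      obtain ⟨-, rfl⟩ := mem_filter.mp hp
      simp)
    (fun y _ => inv_inv y)

theorem sum_linkEdges_of_inv_mul (hS : ∀ s ∈ S, s⁻¹ ∈ S) :
    ∑ p ∈ linkEdges S, of ℝ Γ (p.1⁻¹ * p.2) = ∑ s ∈ S, (linkDegree S s : ℝ) • of ℝ Γ s := by
  rw [← sum_fiberwise_of_maps_to (fun p hp => (mem_linkEdges.mp hp).2.2)]
  refine sum_congr rfl fun s hs => ?_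
  rw [sum_congr rfl fun p hp => congrArg _ (mem_filter.mp hp).2, sum_const,
    card_linkEdges_filter_inv_mul_eq hS hs, Nat.cast_smul_eq_nsmul]

theorem sum_linkEdges_of_inv_mul_swap (hS : ∀ s ∈ S, s⁻¹ ∈ S) :
    ∑ p ∈ linkEdges S, of ℝ Γ (p.2⁻¹ * p.1) = ∑ p ∈ linkEdges S, of ℝ Γ (p.1⁻¹ * p.2) :=
  sum_equiv (Equiv.prodComm Γ Γ) (fun _ => (swap_mem_linkEdges hS).symm) fun _ _ => rfl

def edgeDiff (p : Γ × Γ) (x : Γ) : ℝ :=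
  (if p.2 = x then 1 else 0) - (if p.1 = x then 1 else 0)

/-- `edgeDiff p x = (dδ_x)(p)`, so this is `Λ_{x,y} = ⟨dδ_y, dδ_x⟩_{L²(E)} / 2`. -/
noncomputable def linkLaplacianCoeff (S : Finset Γ) (x y : Γ) : ℝ :=
  1 / 2 * ((#(linkEdges S) : ℝ)⁻¹ * ∑ p ∈ linkEdges S, edgeDiff p y * edgeDiff p x)

theorem sum_sum_edgeDiff_smul {p : Γ × Γ} (hp : p ∈ linkEdges S) :
    ∑ x ∈ S, ∑ y ∈ S, (edgeDiff p x * edgeDiff p y) • of ℝ Γ (x⁻¹ * y)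
      = 2 - of ℝ Γ (p.1⁻¹ * p.2) - of ℝ Γ (p.2⁻¹ * p.1) := by
  obtain ⟨h1, h2, -⟩ := mem_linkEdges.mp hp
  unfold edgeDiff
  rw [sum_sum_mul_smul_of_inv_mul, sum_sub_ite_smul h1 h2, sum_sub_ite_smul h1 h2,
    of_inv_sub_of_inv_mul_of_sub_of]

theorem sum_sum_linkLaplacianCoeff_smul (hS : ∀ s ∈ S, s⁻¹ ∈ S) (hE : (linkEdges S).Nonempty) :
    ∑ x ∈ S, ∑ y ∈ S, linkLaplacianCoeff S x y • of ℝ Γ (x⁻¹ * y)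
      = 1 - ∑ s ∈ S, ((linkDegree S s : ℝ) / #(linkEdges S)) • of ℝ Γ s := by
  set c : ℝ := 1 / 2 * (#(linkEdges S) : ℝ)⁻¹
  have hE0 : (#(linkEdges S) : ℝ) ≠ 0 := by exact_mod_cast hE.card_pos.ne'
  calc ∑ x ∈ S, ∑ y ∈ S, linkLaplacianCoeff S x y • of ℝ Γ (x⁻¹ * y)
      = c • ∑ p ∈ linkEdges S, ∑ x ∈ S, ∑ y ∈ S,
          (edgeDiff p x * edgeDiff p y) • of ℝ Γ (x⁻¹ * y) := by
        symm
        simp only [smul_sum]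
        rw [sum_comm]; refine sum_congr rfl fun x _ => ?_
        rw [sum_comm]; refine sum_congr rfl fun y _ => ?_
        rw [linkLaplacianCoeff, ← mul_assoc, mul_sum, sum_smul]
        refine sum_congr rfl fun p _ => ?_
        rw [smul_smul, mul_comm (edgeDiff p y)]
    _ = c • ∑ p ∈ linkEdges S, (2 - of ℝ Γ (p.1⁻¹ * p.2) - of ℝ Γ (p.2⁻¹ * p.1)) := by
        rw [sum_congr rfl fun p => sum_sum_edgeDiff_smul]
    _ = 1 - ∑ s ∈ S, ((linkDegree S s : ℝ) / #(linkEdges S)) • of ℝ Γ s := by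
        rw [sum_sub_distrib, sum_sub_distrib, sum_linkEdges_of_inv_mul_swap hS,
          sum_linkEdges_of_inv_mul hS, sum_const, ← Nat.cast_smul_eq_nsmul ℝ]
        simp only [div_eq_inv_mul, mul_smul, ← smul_sum, c]
        rw [← one_add_one_eq_two (R := MonoidAlgebra ℝ Γ)]
        match_scalars <;> field_simp <;> ring

theorem sum_linkDegree_div_card (hE : (linkEdges S).Nonempty) :
    ∑ x ∈ S, (linkDegree S x : ℝ) / #(linkEdges S) = 1 := by
  have hE0 : (#(linkEdges S) : ℝ) ≠ 0 := by exact_mod_cast hE.card_pos.ne'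
  rw [← sum_div, ← Nat.cast_sum, sum_linkDegree, div_self hE0]

end Link

theorem stmt18_general {Γ : Type*} [Group Γ] [DecidableEq Γ] (S : Finset Γ)
    (hSsymm : ∀ s ∈ S, s⁻¹ ∈ S)
    (E : Finset (Γ × Γ)) (hE : E = (S ×ˢ S).filter (fun p => p.1⁻¹ * p.2 ∈ S))
    (hEne : E.Nonempty)
    (μ : Γ → ℝ)
    (hμ : ∀ x ∈ S, μ x = ((S.filter (fun y => x⁻¹ * y ∈ S)).card : ℝ) / (E.card : ℝ))
    (δ : Γ → Γ → ℝ) (hδ : ∀ y v : Γ, δ y v = if v = y then 1 else 0)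
    (Λent : Γ → Γ → ℝ)
    (hΛ : ∀ x y : Γ, Λent x y
      = (1 / 2) * ((E.card : ℝ)⁻¹ * ∑ p ∈ E, (δ y p.2 - δ y p.1) * (δ x p.2 - δ x p.1)))
    (Pent : Γ → Γ → ℝ) (hP : ∀ x y : Γ, Pent x y = μ x * μ y)
    (Ient : Γ → Γ → ℝ) (hI : ∀ x y : Γ, Ient x y = if x = y then μ x else 0)
    (lam : ℝ) :
    ∑ x ∈ S, ∑ y ∈ S, (lam⁻¹ * Λent x y + Pent x y - Ient x y) • of ℝ Γ (x⁻¹ * y)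
      = (1 - ∑ x ∈ S, μ x • of ℝ Γ x) * (1 - ∑ x ∈ S, μ x • of ℝ Γ x)
        - (2 - lam⁻¹) • (1 - ∑ x ∈ S, μ x • of ℝ Γ x) := by
  subst hE
  have hμ' : ∀ x ∈ S, μ x = linkDegree S x / #(linkEdges S) := hμ
  have hμ_sum : ∑ x ∈ S, μ x = 1 := by
    rw [sum_congr rfl hμ', sum_linkDegree_div_card hEne]
  have hμ_inv : ∀ x ∈ S, μ x⁻¹ = μ x := fun x hx => by
    rw [hμ' _ (hSsymm x hx), hμ' x hx, linkDegree_inv]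
  set m := ∑ x ∈ S, μ x • of ℝ Γ x
  have hΛsum : ∑ x ∈ S, ∑ y ∈ S, Λent x y • of ℝ Γ (x⁻¹ * y) = 1 - m := by
    have hΛ' : ∀ x y, Λent x y = linkLaplacianCoeff S x y := fun x y => by
      rw [hΛ]; simp only [hδ]; rfl
    simp only [hΛ']
    rw [sum_sum_linkLaplacianCoeff_smul hSsymm hEne, sum_congr rfl fun x hx => by rw [← hμ' x hx]]
  have hPsum : ∑ x ∈ S, ∑ y ∈ S, Pent x y • of ℝ Γ (x⁻¹ * y) = m * m := by
    simp only [hP]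
    rw [sum_sum_mul_smul_of_inv_mul, sum_smul_of_inv_eq hSsymm hμ_inv]
  have hIsum : ∑ x ∈ S, ∑ y ∈ S, Ient x y • of ℝ Γ (x⁻¹ * y) = 1 := by
    simp only [hI]
    rw [sum_sum_ite_smul_of_inv_mul, hμ_sum, one_smul]
  calc ∑ x ∈ S, ∑ y ∈ S, (lam⁻¹ * Λent x y + Pent x y - Ient x y) • of ℝ Γ (x⁻¹ * y)
      = lam⁻¹ • (1 - m) + m * m - 1 := by
        simp only [sub_smul, add_smul, mul_smul, sum_sub_distrib, sum_add_distrib, ← smul_sum,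
          hΛsum, hPsum, hIsum]
    _ = (1 - m) * (1 - m) - (2 - lam⁻¹) • (1 - m) := by
        simp only [mul_sub, sub_mul, one_mul, mul_one]
        module

/-- the matrix-coefficient identity
`Σ_(x,y∈S) (λ⁻¹Λ_(x,y) + P_(x,y) − I_(x,y))·x⁻¹y = Δ² − (2−λ⁻¹)Δ`. -/
theorem stmt18 {Γ : Type*} [Group Γ] [DecidableEq Γ] (S : Finset Γ)
    (hSsymm : ∀ s ∈ S, s⁻¹ ∈ S) (hone : (1 : Γ) ∉ S)
    (hSgen : Subgroup.closure (S : Set Γ) = ⊤)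
    (E : Finset (Γ × Γ)) (hE : E = (S ×ˢ S).filter (fun p => p.1⁻¹ * p.2 ∈ S))
    (hEne : E.Nonempty)
    (μ : Γ → ℝ)
    (hμ : ∀ x ∈ S, μ x = ((S.filter (fun y => x⁻¹ * y ∈ S)).card : ℝ) / (E.card : ℝ))
    (δ : Γ → Γ → ℝ) (hδ : ∀ y v : Γ, δ y v = if v = y then 1 else 0)
    (Λent : Γ → Γ → ℝ)
    (hΛ : ∀ x y : Γ, Λent x y
      = (1 / 2) * ((E.card : ℝ)⁻¹ * ∑ p ∈ E, (δ y p.2 - δ y p.1) * (δ x p.2 - δ x p.1)))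
    (Pent : Γ → Γ → ℝ) (hP : ∀ x y : Γ, Pent x y = μ x * μ y)
    (Ient : Γ → Γ → ℝ) (hI : ∀ x y : Γ, Ient x y = if x = y then μ x else 0)
    (lam : ℝ) (hlam : lam ≠ 0) :
    ∑ x ∈ S, ∑ y ∈ S, (lam⁻¹ * Λent x y + Pent x y - Ient x y) • of ℝ Γ (x⁻¹ * y)
      = (1 - ∑ x ∈ S, μ x • of ℝ Γ x) * (1 - ∑ x ∈ S, μ x • of ℝ Γ x)
        - (2 - lam⁻¹) • (1 - ∑ x ∈ S, μ x • of ℝ Γ x) :=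
  stmt18_general S hSsymm E hE hEne μ hμ δ hδ Λent hΛ Pent hP Ient hI lam
end
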